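/- arXiv:2106.00993 — 3 statements merged into one kernel-verified Lean document; each statement's English description precedes it below -/
import Mathlib

section
/- Let f : X × Y → ℝ be differentiable, L-smooth jointly, μ_y-strongly convex in y for each fixed x, where Y ⊆ ℝ^q is convex and compact. Define φ(x) = argmin_{y ∈ Y} f(x, y). Then φ is (L/μ_y)-Lipschitz: for all x₁, x₂ ∈ X, ‖φ(x₁) − φ(x₂)‖ ≤ (L/μ_y)‖x₁ − x₂‖. -/
/-!
Write `u = φ x₁`, `v = φ x₂`. Adding the strong convexity inequalities at `(u, v)` and `(v, u)`
makes `gy x₁` strongly monotone on `Y`; combining this with the two variational inequalities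
characterising `u` and `v` gives `μ ‖v - u‖² ≤ ⟪gy x₁ v - gy x₂ v, v - u⟫`, and Cauchy–Schwarz
together with the Lipschitz bound on `gy` in `x` yields `μ ‖u - v‖ ≤ L ‖x₁ - x₂‖`.
-/

open scoped RealInnerProductSpace

section VariationalInequality

variable {E : Type*} [NormedAddCommGroup E] [InnerProductSpace ℝ E]

theorem strongMonotoneOn_of_strongConvex_ineq {Y : Set E} {f : E → ℝ} {g : E → E} {μ : ℝ}
    (hconv : ∀ y₁ ∈ Y, ∀ y₂ ∈ Y, f y₂ ≥ f y₁ + ⟪g y₁, y₂ - y₁⟫ + μ / 2 * ‖y₂ - y₁‖ ^ 2)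
    {u v : E} (hu : u ∈ Y) (hv : v ∈ Y) :
    μ * ‖v - u‖ ^ 2 ≤ ⟪g v - g u, v - u⟫ := by
  have huv := hconv u hu v hv
  have hvu := hconv v hv u hu
  rw [norm_sub_rev u v, ← neg_sub v u, inner_neg_right] at hvu
  rw [inner_sub_left]
  linarith

theorem mul_norm_sub_le_of_variationalInequality {Y : Set E} {g₁ g₂ : E → E} {μ : ℝ}
    (hmono : ∀ u ∈ Y, ∀ v ∈ Y, μ * ‖v - u‖ ^ 2 ≤ ⟪g₁ v - g₁ u, v - u⟫)
    {u v : E} (hu : u ∈ Y) (hv : v ∈ Y)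
    (hu_sol : ∀ y ∈ Y, 0 ≤ ⟪g₁ u, y - u⟫) (hv_sol : ∀ y ∈ Y, 0 ≤ ⟪g₂ v, y - v⟫) :
    μ * ‖u - v‖ ≤ ‖g₁ v - g₂ v‖ := by
  have hvu := hv_sol u hu
  rw [← neg_sub v u, inner_neg_right] at hvu
  have key : μ * ‖v - u‖ ^ 2 ≤ ‖g₁ v - g₂ v‖ * ‖v - u‖ :=
    calc μ * ‖v - u‖ ^ 2 ≤ ⟪g₁ v - g₁ u, v - u⟫ + ⟪g₁ u, v - u⟫ - ⟪g₂ v, v - u⟫ := by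
          linarith [hmono u hu v hv, hu_sol v hv]
      _ = ⟪g₁ v - g₂ v, v - u⟫ := by simp only [inner_sub_left]; ring
      _ ≤ ‖g₁ v - g₂ v‖ * ‖v - u‖ := real_inner_le_norm _ _
  rw [norm_sub_rev u v]
  rcases (norm_nonneg (v - u)).eq_or_lt with h | h
  · rw [← h, mul_zero]
    exact norm_nonneg _
  · rw [sq] at key
    nlinarith

end VariationalInequality

theorem stmt12_general {p q : ℕ}
    (X : Set (EuclideanSpace ℝ (Fin p))) (Y : Set (EuclideanSpace ℝ (Fin q)))
    (f : EuclideanSpace ℝ (Fin p) → EuclideanSpace ℝ (Fin q) → ℝ)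
    (gy : EuclideanSpace ℝ (Fin p) → EuclideanSpace ℝ (Fin q) → EuclideanSpace ℝ (Fin q))
    (L μ : ℝ) (hμ : 0 < μ)
    (hsmooth : ∀ x₁ x₂ : EuclideanSpace ℝ (Fin p), ∀ y₁ y₂ : EuclideanSpace ℝ (Fin q),
      ‖gy x₁ y₁ - gy x₂ y₂‖ ≤ L * (‖x₁ - x₂‖ + ‖y₁ - y₂‖))
    (hconv : ∀ x : EuclideanSpace ℝ (Fin p), ∀ y₁ ∈ Y, ∀ y₂ ∈ Y,
      f x y₂ ≥ f x y₁ + inner ℝ (gy x y₁) (y₂ - y₁) + μ / 2 * ‖y₂ - y₁‖ ^ 2)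
    (φ : EuclideanSpace ℝ (Fin p) → EuclideanSpace ℝ (Fin q))
    (hφY : ∀ x, φ x ∈ Y)
    (hφmin : ∀ x, ∀ y ∈ Y, (0 : ℝ) ≤ inner ℝ (gy x (φ x)) (y - φ x)) :
    ∀ x₁ ∈ X, ∀ x₂ ∈ X, ‖φ x₁ - φ x₂‖ ≤ (L / μ) * ‖x₁ - x₂‖ := by
  intro x₁ _ x₂ _
  have hstable : μ * ‖φ x₁ - φ x₂‖ ≤ ‖gy x₁ (φ x₂) - gy x₂ (φ x₂)‖ :=
    mul_norm_sub_le_of_variationalInequality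
      (fun _ hu _ hv => strongMonotoneOn_of_strongConvex_ineq (hconv x₁) hu hv)
      (hφY x₁) (hφY x₂) (hφmin x₁) (hφmin x₂)
  have hlip : ‖gy x₁ (φ x₂) - gy x₂ (φ x₂)‖ ≤ L * ‖x₁ - x₂‖ := by
    simpa using hsmooth x₁ x₂ (φ x₂) (φ x₂)
  rw [div_mul_eq_mul_div, le_div_iff₀ hμ, mul_comm]
  exact hstable.trans hlip

/-- Let `f(x,y)` be differentiable with `y`-gradient `gy`, jointly
`L`-Lipschitz gradients, and `μ`-strongly convex in `y` on the convex compact set `Y`.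
If `φ x` is the minimizer of `f(x, ·)` over `Y`, then `φ` is `(L/μ)`-Lipschitz. -/
theorem stmt12 {p q : ℕ}
    (X : Set (EuclideanSpace ℝ (Fin p))) (Y : Set (EuclideanSpace ℝ (Fin q)))
    (hY : Convex ℝ Y) (hYcomp : IsCompact Y)
    (f : EuclideanSpace ℝ (Fin p) → EuclideanSpace ℝ (Fin q) → ℝ)
    (gy : EuclideanSpace ℝ (Fin p) → EuclideanSpace ℝ (Fin q) → EuclideanSpace ℝ (Fin q))
    (L μ : ℝ) (hL : 0 < L) (hμ : 0 < μ)
    (hsmooth : ∀ x₁ x₂ : EuclideanSpace ℝ (Fin p), ∀ y₁ y₂ : EuclideanSpace ℝ (Fin q),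
      ‖gy x₁ y₁ - gy x₂ y₂‖ ≤ L * (‖x₁ - x₂‖ + ‖y₁ - y₂‖))
    (hconv : ∀ x : EuclideanSpace ℝ (Fin p), ∀ y₁ ∈ Y, ∀ y₂ ∈ Y,
      f x y₂ ≥ f x y₁ + inner ℝ (gy x y₁) (y₂ - y₁) + μ / 2 * ‖y₂ - y₁‖ ^ 2)
    (φ : EuclideanSpace ℝ (Fin p) → EuclideanSpace ℝ (Fin q))
    (hφY : ∀ x, φ x ∈ Y)
    (hφmin : ∀ x, ∀ y ∈ Y, (0 : ℝ) ≤ inner ℝ (gy x (φ x)) (y - φ x)) :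
    ∀ x₁ ∈ X, ∀ x₂ ∈ X, ‖φ x₁ - φ x₂‖ ≤ (L / μ) * ‖x₁ - x₂‖ :=
  stmt12_general X Y f gy L μ hμ hsmooth hconv φ hφY hφmin
end

section
/- Let L : Θ × Z × Ξ → ℝ be L-smooth, μ_ζ-strongly concave in ζ ∈ Z, and μ_ξ-strongly convex in ξ ∈ Ξ, with Z, Ξ convex and compact. For each θ let (ζ*(θ), ξ*(θ)) denote the unique saddle point of max_{ζ∈Z} min_{ξ∈Ξ} L(θ, ζ, ξ). Then ζ* and ξ* are Lipschitz in θ: ‖ζ*(θ₁) − ζ*(θ₂)‖ ≤ κ_ζ(κ_ξ + 1)‖θ₁ − θ₂‖ and ‖ξ*(θ₁) − ξ*(θ₂)‖ ≤ κ_ξ(κ_ζ + 1)‖θ₁ − θ₂‖, where κ_ζ = L/μ_ζ and κ_ξ = L/μ_ξ. -/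
/-!
Adding the strong concavity and strong convexity inequalities at two points makes the saddle
gradient `(-∇_ζ L, ∇_ξ L)` strongly monotone. Comparing this with the first-order optimality
conditions at `θ₁` and `θ₂` and using smoothness, the distances `a = ‖ζ*(θ₁) - ζ*(θ₂)‖`,
`b = ‖ξ*(θ₁) - ξ*(θ₂)‖`, `t = ‖θ₁ - θ₂‖` satisfy `μ_ζ a² + μ_ξ b² ≤ L t (a + b)` and
`μ_ζ a ≤ L (t + b)`. If `μ_ξ b ≤ L t`, the second gives `a ≤ κ_ζ (κ_ξ + 1) t`; otherwise the
first forces `μ_ζ a ≤ L t`. The bound on `b` is symmetric.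
-/

open scoped RealInnerProductSpace

section

variable {E F G : Type*} [NormedAddCommGroup F] [InnerProductSpace ℝ F]

theorem saddle_gradient_strongly_monotone [NormedAddCommGroup G] [InnerProductSpace ℝ G]
    {Z : Set F} {Ξ : Set G} {f : F → G → ℝ} {gζ : F → G → F} {gξ : F → G → G} {μζ μξ : ℝ}
    (hconc : ∀ ξ, ∀ ζ₁ ∈ Z, ∀ ζ₂ ∈ Z,
      -f ζ₂ ξ ≥ -f ζ₁ ξ - ⟪gζ ζ₁ ξ, ζ₂ - ζ₁⟫ + μζ / 2 * ‖ζ₂ - ζ₁‖ ^ 2)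
    (hconv : ∀ ζ, ∀ ξ₁ ∈ Ξ, ∀ ξ₂ ∈ Ξ,
      f ζ ξ₂ ≥ f ζ ξ₁ + ⟪gξ ζ ξ₁, ξ₂ - ξ₁⟫ + μξ / 2 * ‖ξ₂ - ξ₁‖ ^ 2)
    {ζ₁ ζ₂ : F} {ξ₁ ξ₂ : G} (hζ₁ : ζ₁ ∈ Z) (hζ₂ : ζ₂ ∈ Z) (hξ₁ : ξ₁ ∈ Ξ) (hξ₂ : ξ₂ ∈ Ξ) :
    μζ * ‖ζ₁ - ζ₂‖ ^ 2 + μξ * ‖ξ₁ - ξ₂‖ ^ 2 ≤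
      ⟪gζ ζ₂ ξ₂ - gζ ζ₁ ξ₁, ζ₁ - ζ₂⟫ + ⟪gξ ζ₁ ξ₁ - gξ ζ₂ ξ₂, ξ₁ - ξ₂⟫ := by
  have h₁ := hconc ξ₁ ζ₁ hζ₁ ζ₂ hζ₂
  have h₂ := hconc ξ₂ ζ₂ hζ₂ ζ₁ hζ₁
  have h₃ := hconv ζ₁ ξ₁ hξ₁ ξ₂ hξ₂
  have h₄ := hconv ζ₂ ξ₂ hξ₂ ξ₁ hξ₁
  rw [← neg_sub ζ₁ ζ₂, inner_neg_right, norm_neg] at h₁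
  rw [← neg_sub ξ₁ ξ₂, inner_neg_right, norm_neg] at h₃
  rw [inner_sub_left, inner_sub_left]
  linarith

variable [SeminormedAddCommGroup E] [SeminormedAddCommGroup G]

theorem inner_sub_le_of_optimality {s : Set F} {g : E → F → G → F} {x : E → F} {y : E → G}
    {Lc : ℝ} (hmem : ∀ θ, x θ ∈ s) (hopt : ∀ θ, ∀ z ∈ s, ⟪g θ (x θ) (y θ), z - x θ⟫ ≤ 0)
    (hlip : ∀ θ₁ θ₂ z ξ₁ ξ₂, ‖g θ₁ z ξ₁ - g θ₂ z ξ₂‖ ≤ Lc * (‖θ₁ - θ₂‖ + ‖ξ₁ - ξ₂‖))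
    (θ₁ θ₂ : E) (ξ : G) :
    ⟪g θ₂ (x θ₂) (y θ₂) - g θ₂ (x θ₁) ξ, x θ₁ - x θ₂⟫ ≤
      Lc * (‖θ₁ - θ₂‖ + ‖y θ₁ - ξ‖) * ‖x θ₁ - x θ₂‖ := by
  have h₁ := hopt θ₁ (x θ₂) (hmem θ₂)
  have h₂ := hopt θ₂ (x θ₁) (hmem θ₁)
  rw [← neg_sub, inner_neg_right] at h₁
  calc ⟪g θ₂ (x θ₂) (y θ₂) - g θ₂ (x θ₁) ξ, x θ₁ - x θ₂⟫
      ≤ ⟪g θ₁ (x θ₁) (y θ₁) - g θ₂ (x θ₁) ξ, x θ₁ - x θ₂⟫ := by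
        rw [inner_sub_left, inner_sub_left]; linarith
    _ ≤ ‖g θ₁ (x θ₁) (y θ₁) - g θ₂ (x θ₁) ξ‖ * ‖x θ₁ - x θ₂‖ := real_inner_le_norm _ _
    _ ≤ Lc * (‖θ₁ - θ₂‖ + ‖y θ₁ - ξ‖) * ‖x θ₁ - x θ₂‖ := by gcongr; exact hlip ..

end

theorem le_mul_of_saddle_bounds {L μ ν a b t : ℝ} (hL : 0 ≤ L) (hμ : 0 < μ) (hν : 0 < ν)
    (ha : 0 ≤ a) (hb : 0 ≤ b) (ht : 0 ≤ t)
    (hjoint : μ * a ^ 2 + ν * b ^ 2 ≤ L * t * a + L * t * b)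
    (hblock : μ * a ^ 2 ≤ L * (t + b) * a) :
    a ≤ L / μ * (L / ν + 1) * t := by
  rcases ha.eq_or_lt with rfl | ha
  · positivity
  have key : μ * ν * a ≤ L * (L + ν) * t := by
    by_cases hbt : ν * b ≤ L * t
    · have : μ * a ≤ L * (t + b) := le_of_mul_le_mul_right (by nlinarith) ha
      nlinarith
    · have : μ * a ≤ L * t := le_of_mul_le_mul_right (by nlinarith) ha
      nlinarith [mul_nonneg (mul_nonneg hL hL) ht]
  rw [show L / μ * (L / ν + 1) * t = L * (L + ν) * t / (μ * ν) by field_simp,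
    le_div_iff₀ (by positivity)]
  linarith

theorem stmt18_general {dθ dζ dξ : ℕ}
    (Z : Set (EuclideanSpace ℝ (Fin dζ))) (Ξ : Set (EuclideanSpace ℝ (Fin dξ)))
    (L : EuclideanSpace ℝ (Fin dθ) → EuclideanSpace ℝ (Fin dζ) →
      EuclideanSpace ℝ (Fin dξ) → ℝ)
    (gζ : EuclideanSpace ℝ (Fin dθ) → EuclideanSpace ℝ (Fin dζ) →
      EuclideanSpace ℝ (Fin dξ) → EuclideanSpace ℝ (Fin dζ))
    (gξ : EuclideanSpace ℝ (Fin dθ) → EuclideanSpace ℝ (Fin dζ) →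
      EuclideanSpace ℝ (Fin dξ) → EuclideanSpace ℝ (Fin dξ))
    (Lc μζ μξ : ℝ) (hLc : 0 < Lc) (hμζ : 0 < μζ) (hμξ : 0 < μξ)
    (hsmoothζ : ∀ θ₁ θ₂ ζ₁ ζ₂ ξ₁ ξ₂,
      ‖gζ θ₁ ζ₁ ξ₁ - gζ θ₂ ζ₂ ξ₂‖ ≤ Lc * (‖θ₁ - θ₂‖ + ‖ζ₁ - ζ₂‖ + ‖ξ₁ - ξ₂‖))
    (hsmoothξ : ∀ θ₁ θ₂ ζ₁ ζ₂ ξ₁ ξ₂,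
      ‖gξ θ₁ ζ₁ ξ₁ - gξ θ₂ ζ₂ ξ₂‖ ≤ Lc * (‖θ₁ - θ₂‖ + ‖ζ₁ - ζ₂‖ + ‖ξ₁ - ξ₂‖))
    (hconc : ∀ θ ξ, ∀ ζ₁ ∈ Z, ∀ ζ₂ ∈ Z,
      -L θ ζ₂ ξ ≥ -L θ ζ₁ ξ - inner ℝ (gζ θ ζ₁ ξ) (ζ₂ - ζ₁) + μζ / 2 * ‖ζ₂ - ζ₁‖ ^ 2)
    (hconv : ∀ θ ζ, ∀ ξ₁ ∈ Ξ, ∀ ξ₂ ∈ Ξ,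
      L θ ζ ξ₂ ≥ L θ ζ ξ₁ + inner ℝ (gξ θ ζ ξ₁) (ξ₂ - ξ₁) + μξ / 2 * ‖ξ₂ - ξ₁‖ ^ 2)
    (ζstar : EuclideanSpace ℝ (Fin dθ) → EuclideanSpace ℝ (Fin dζ))
    (ξstar : EuclideanSpace ℝ (Fin dθ) → EuclideanSpace ℝ (Fin dξ))
    (hζmem : ∀ θ, ζstar θ ∈ Z) (hξmem : ∀ θ, ξstar θ ∈ Ξ)
    (hζopt : ∀ θ, ∀ ζ ∈ Z, inner ℝ (gζ θ (ζstar θ) (ξstar θ)) (ζ - ζstar θ) ≤ (0 : ℝ))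
    (hξopt : ∀ θ, ∀ ξ ∈ Ξ, (0 : ℝ) ≤ inner ℝ (gξ θ (ζstar θ) (ξstar θ)) (ξ - ξstar θ)) :
    ∀ θ₁ θ₂ : EuclideanSpace ℝ (Fin dθ),
      ‖ζstar θ₁ - ζstar θ₂‖ ≤ (Lc / μζ) * (Lc / μξ + 1) * ‖θ₁ - θ₂‖ ∧
      ‖ξstar θ₁ - ξstar θ₂‖ ≤ (Lc / μξ) * (Lc / μζ + 1) * ‖θ₁ - θ₂‖ := by
  intro θ₁ θ₂
  have hpertζ := inner_sub_le_of_optimality hζmem hζopt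
    (fun θ₁ θ₂ ζ ξ₁ ξ₂ => by simpa using hsmoothζ θ₁ θ₂ ζ ζ ξ₁ ξ₂) θ₁ θ₂
  -- `ξ*` satisfies the maximiser's optimality condition for `-∇_ξ L`, with `ζ` and `ξ` swapped
  have hpertξ := inner_sub_le_of_optimality (g := fun θ ξ ζ => -gξ θ ζ ξ) hξmem
    (fun θ ξ hξ => by simpa [inner_neg_left] using hξopt θ ξ hξ)
    (fun θ₁ θ₂ ξ ζ₁ ζ₂ => by
      rw [neg_sub_neg, norm_sub_rev]; simpa using hsmoothξ θ₁ θ₂ ζ₁ ζ₂ ξ ξ)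
    θ₁ θ₂
  have hjoint := saddle_gradient_strongly_monotone (hconc θ₂) (hconv θ₂)
    (hζmem θ₁) (hζmem θ₂) (hξmem θ₁) (hξmem θ₂)
  have hζblock := saddle_gradient_strongly_monotone (hconc θ₂) (hconv θ₂)
    (hζmem θ₁) (hζmem θ₂) (hξmem θ₂) (hξmem θ₂)
  have hξblock := saddle_gradient_strongly_monotone (hconc θ₂) (hconv θ₂)
    (hζmem θ₂) (hζmem θ₂) (hξmem θ₁) (hξmem θ₂)
  have hζ₁ := hpertζ (ξstar θ₁)
  have hζ₂ := hpertζ (ξstar θ₂)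
  have hξ₁ := hpertξ (ζstar θ₁)
  have hξ₂ := hpertξ (ζstar θ₂)
  simp only [sub_self, norm_zero, inner_zero_right, add_zero, zero_add, mul_zero,
    zero_pow two_ne_zero, neg_sub_neg] at hζblock hξblock hζ₁ hξ₁ hξ₂
  exact ⟨le_mul_of_saddle_bounds (b := ‖ξstar θ₁ - ξstar θ₂‖) hLc.le hμζ hμξ
      (norm_nonneg _) (norm_nonneg _) (norm_nonneg _) (by linarith) (by linarith),
    le_mul_of_saddle_bounds (b := ‖ζstar θ₁ - ζstar θ₂‖) hLc.le hμξ hμζ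
      (norm_nonneg _) (norm_nonneg _) (norm_nonneg _) (by linarith) (by linarith)⟩

/-- If `L(θ,ζ,ξ)` is `L`-smooth, `μζ`-strongly concave in `ζ ∈ Z` and
`μξ`-strongly convex in `ξ ∈ Ξ` (`Z`, `Ξ` convex compact), then the saddle-point maps
`θ ↦ ζ*(θ)`, `θ ↦ ξ*(θ)` are Lipschitz with constants `κζ(κξ+1)` and `κξ(κζ+1)`,
where `κζ = L/μζ` and `κξ = L/μξ`. -/
theorem stmt18 {dθ dζ dξ : ℕ}
    (Z : Set (EuclideanSpace ℝ (Fin dζ))) (Ξ : Set (EuclideanSpace ℝ (Fin dξ)))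
    (hZ : Convex ℝ Z) (hΞ : Convex ℝ Ξ) (hZc : IsCompact Z) (hΞc : IsCompact Ξ)
    (L : EuclideanSpace ℝ (Fin dθ) → EuclideanSpace ℝ (Fin dζ) →
      EuclideanSpace ℝ (Fin dξ) → ℝ)
    (gζ : EuclideanSpace ℝ (Fin dθ) → EuclideanSpace ℝ (Fin dζ) →
      EuclideanSpace ℝ (Fin dξ) → EuclideanSpace ℝ (Fin dζ))
    (gξ : EuclideanSpace ℝ (Fin dθ) → EuclideanSpace ℝ (Fin dζ) →
      EuclideanSpace ℝ (Fin dξ) → EuclideanSpace ℝ (Fin dξ))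
    (Lc μζ μξ : ℝ) (hLc : 0 < Lc) (hμζ : 0 < μζ) (hμξ : 0 < μξ)
    (hsmoothζ : ∀ θ₁ θ₂ ζ₁ ζ₂ ξ₁ ξ₂,
      ‖gζ θ₁ ζ₁ ξ₁ - gζ θ₂ ζ₂ ξ₂‖ ≤ Lc * (‖θ₁ - θ₂‖ + ‖ζ₁ - ζ₂‖ + ‖ξ₁ - ξ₂‖))
    (hsmoothξ : ∀ θ₁ θ₂ ζ₁ ζ₂ ξ₁ ξ₂,
      ‖gξ θ₁ ζ₁ ξ₁ - gξ θ₂ ζ₂ ξ₂‖ ≤ Lc * (‖θ₁ - θ₂‖ + ‖ζ₁ - ζ₂‖ + ‖ξ₁ - ξ₂‖))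
    (hconc : ∀ θ ξ, ∀ ζ₁ ∈ Z, ∀ ζ₂ ∈ Z,
      -L θ ζ₂ ξ ≥ -L θ ζ₁ ξ - inner ℝ (gζ θ ζ₁ ξ) (ζ₂ - ζ₁) + μζ / 2 * ‖ζ₂ - ζ₁‖ ^ 2)
    (hconv : ∀ θ ζ, ∀ ξ₁ ∈ Ξ, ∀ ξ₂ ∈ Ξ,
      L θ ζ ξ₂ ≥ L θ ζ ξ₁ + inner ℝ (gξ θ ζ ξ₁) (ξ₂ - ξ₁) + μξ / 2 * ‖ξ₂ - ξ₁‖ ^ 2)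
    (ζstar : EuclideanSpace ℝ (Fin dθ) → EuclideanSpace ℝ (Fin dζ))
    (ξstar : EuclideanSpace ℝ (Fin dθ) → EuclideanSpace ℝ (Fin dξ))
    (hζmem : ∀ θ, ζstar θ ∈ Z) (hξmem : ∀ θ, ξstar θ ∈ Ξ)
    (hζopt : ∀ θ, ∀ ζ ∈ Z, inner ℝ (gζ θ (ζstar θ) (ξstar θ)) (ζ - ζstar θ) ≤ (0 : ℝ))
    (hξopt : ∀ θ, ∀ ξ ∈ Ξ, (0 : ℝ) ≤ inner ℝ (gξ θ (ζstar θ) (ξstar θ)) (ξ - ξstar θ)) :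
    ∀ θ₁ θ₂ : EuclideanSpace ℝ (Fin dθ),
      ‖ζstar θ₁ - ζstar θ₂‖ ≤ (Lc / μζ) * (Lc / μξ + 1) * ‖θ₁ - θ₂‖ ∧
      ‖ξstar θ₁ - ξstar θ₂‖ ≤ (Lc / μξ) * (Lc / μζ + 1) * ‖θ₁ - θ₂‖ :=
  stmt18_general Z Ξ L gζ gξ Lc μζ μξ hLc hμζ hμξ hsmoothζ hsmoothξ hconc hconv ζstar ξstar hζmem
    hξmem hζopt hξopt
end

section
/- Let P be a row-stochastic n×n matrix, Λ a diagonal matrix with positive diagonal entries, γ ∈ [0,1), and λ_w, λ_Q > 0. Then the matrix λ_w λ_Q I + (I − γP) Λ⁻¹ (I − γPᵀ) Λ is invertible, and the regularized weight w_L = (λ_w λ_Q I + (I − γP)Λ⁻¹(I − γPᵀ)Λ)⁻¹ ((I − γP)Λ⁻¹(1−γ)ν₀ + λ_Q R) can be written as w_L = w + (λ_w λ_Q I + (I − γP)Λ⁻¹(I − γPᵀ)Λ)⁻¹ (λ_Q R − λ_Q λ_w w), where w = (1−γ) Λ⁻¹ (I − γPᵀ)⁻¹ ν₀. -/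
open Matrix

lemma stmt19_aux_det {n : ℕ} (P : Matrix (Fin n) (Fin n) ℝ)
    (hP_nonneg : ∀ i j, 0 ≤ P i j) (hP_rows : ∀ i, ∑ j, P i j = 1)
    (γ : ℝ) (hγ0 : 0 ≤ γ) (hγ1 : γ < 1) :
    ((1 : Matrix (Fin n) (Fin n) ℝ) - γ • P).det ≠ 0 := by
  intro h
  obtain ⟨v, hv, hveq⟩ := (Matrix.exists_mulVec_eq_zero_iff).2 h
  have hv' : ∀ i, v i = γ * ∑ j, P i j * v j := by
    intro i
    have := congrFun hveq i
    rw [Matrix.sub_mulVec, Matrix.one_mulVec, Matrix.smul_mulVec] at this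
    have h2 : v i - γ * (P *ᵥ v) i = 0 := this
    rw [sub_eq_zero] at h2
    simpa [Matrix.mulVec, dotProduct] using h2
  obtain ⟨i0, hi0⟩ := Function.ne_iff.mp hv
  obtain ⟨i, -, hi⟩ := Finset.exists_max_image Finset.univ (fun j => |v j|) ⟨i0, Finset.mem_univ _⟩
  have hipos : 0 < |v i| := lt_of_lt_of_le (abs_pos.mpr hi0) (hi i0 (Finset.mem_univ _))
  have hle : |v i| ≤ γ * |v i| := by
    calc |v i| = |γ * ∑ j, P i j * v j| := by rw [← hv' i]
    _ = γ * |∑ j, P i j * v j| := by rw [abs_mul, abs_of_nonneg hγ0]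
    _ ≤ γ * ∑ j, P i j * |v j| := by
        apply mul_le_mul_of_nonneg_left _ hγ0
        calc |∑ j, P i j * v j| ≤ ∑ j, |P i j * v j| := Finset.abs_sum_le_sum_abs _ _
        _ = ∑ j, P i j * |v j| := by
            refine Finset.sum_congr rfl fun j _ => ?_
            rw [abs_mul, abs_of_nonneg (hP_nonneg i j)]
    _ ≤ γ * ∑ j, P i j * |v i| := by
        apply mul_le_mul_of_nonneg_left _ hγ0
        exact Finset.sum_le_sum fun j _ =>
          mul_le_mul_of_nonneg_left (hi j (Finset.mem_univ _)) (hP_nonneg i j)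
    _ = γ * |v i| := by rw [← Finset.sum_mul, hP_rows i, one_mul]
  nlinarith

/-- With `P` row stochastic, `Λ = diagonal μvec` positive diagonal,
`γ ∈ [0,1)` and `λ_w, λ_Q > 0`, the matrix
`A = λ_w λ_Q I + (I − γP) Λ⁻¹ (I − γPᵀ) Λ` is invertible, and the regularized weight
`w_L = A⁻¹ ((I − γP)Λ⁻¹ (1−γ)ν₀ + λ_Q R)` satisfies
`w_L = w + A⁻¹ (λ_Q R − λ_Q λ_w w)` where `w = (1−γ) Λ⁻¹ (I − γPᵀ)⁻¹ ν₀`. -/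
theorem stmt19 {n : ℕ} (P : Matrix (Fin n) (Fin n) ℝ)
    (hP_nonneg : ∀ i j, 0 ≤ P i j)
    (hP_rows : ∀ i, ∑ j, P i j = 1)
    (μvec : Fin n → ℝ) (hμ : ∀ i, 0 < μvec i)
    (γ : ℝ) (hγ0 : 0 ≤ γ) (hγ1 : γ < 1)
    (lw lQ : ℝ) (hlw : 0 < lw) (hlQ : 0 < lQ)
    (ν₀ : Fin n → ℝ) (hν₀ : ∀ i, 0 ≤ ν₀ i) (hν₀sum : ∑ i, ν₀ i = 1)
    (R : Fin n → ℝ) :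
    letI Λ : Matrix (Fin n) (Fin n) ℝ := Matrix.diagonal μvec
    letI A : Matrix (Fin n) (Fin n) ℝ :=
      (lw * lQ) • (1 : Matrix (Fin n) (Fin n) ℝ) +
        ((1 : Matrix (Fin n) (Fin n) ℝ) - γ • P) * Λ⁻¹ *
          ((1 : Matrix (Fin n) (Fin n) ℝ) - γ • Pᵀ) * Λ
    letI w : Fin n → ℝ :=
      (1 - γ) • (Λ⁻¹ * ((1 : Matrix (Fin n) (Fin n) ℝ) - γ • Pᵀ)⁻¹).mulVec ν₀
    IsUnit A ∧
      A⁻¹.mulVec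
          ((1 - γ) • (((1 : Matrix (Fin n) (Fin n) ℝ) - γ • P) * Λ⁻¹).mulVec ν₀ +
            lQ • R) =
        w + A⁻¹.mulVec (lQ • R - (lQ * lw) • w) := by
  set Λ : Matrix (Fin n) (Fin n) ℝ := Matrix.diagonal μvec with hΛdef
  set N : Matrix (Fin n) (Fin n) ℝ := (1 : Matrix (Fin n) (Fin n) ℝ) - γ • P with hNdef
  set M : Matrix (Fin n) (Fin n) ℝ := (1 : Matrix (Fin n) (Fin n) ℝ) - γ • Pᵀ with hMdef
  set A : Matrix (Fin n) (Fin n) ℝ :=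
    (lw * lQ) • (1 : Matrix (Fin n) (Fin n) ℝ) + N * Λ⁻¹ * M * Λ with hAdef
  set w : Fin n → ℝ := (1 - γ) • (Λ⁻¹ * M⁻¹).mulVec ν₀ with hwdef
  have hMN : M = Nᵀ := by
    rw [hMdef, hNdef, Matrix.transpose_sub, Matrix.transpose_one, Matrix.transpose_smul]
  have hNdet : IsUnit N.det :=
    isUnit_iff_ne_zero.mpr (stmt19_aux_det P hP_nonneg hP_rows γ hγ0 hγ1)
  have hMdet : IsUnit M.det := by rw [hMN, Matrix.det_transpose]; exact hNdet
  have hΛdet : IsUnit Λ.det := by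
    rw [Matrix.det_diagonal]
    exact isUnit_iff_ne_zero.mpr (ne_of_gt (Finset.prod_pos fun i _ => hμ i))
  -- inverse of Λ
  have hΛinv : Λ⁻¹ = Matrix.diagonal (fun i => (μvec i)⁻¹) := by
    apply Matrix.inv_eq_right_inv
    rw [Matrix.diagonal_mul_diagonal]
    convert Matrix.diagonal_one using 2
    exact funext fun i => mul_inv_cancel₀ (ne_of_gt (hμ i))
  -- conjugation by D = diagonal sqrt μ
  set D : Matrix (Fin n) (Fin n) ℝ := Matrix.diagonal (fun i => Real.sqrt (μvec i)) with hDdef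
  set E : Matrix (Fin n) (Fin n) ℝ := Matrix.diagonal (fun i => (Real.sqrt (μvec i))⁻¹) with hEdef
  have hsq : ∀ i, 0 < Real.sqrt (μvec i) := fun i => Real.sqrt_pos.mpr (hμ i)
  have hDE : D * E = 1 := by
    rw [hDdef, hEdef, Matrix.diagonal_mul_diagonal]
    convert Matrix.diagonal_one using 2
    exact funext fun i => mul_inv_cancel₀ (ne_of_gt (hsq i))
  have hED : E * D = 1 := by
    rw [hDdef, hEdef, Matrix.diagonal_mul_diagonal]
    convert Matrix.diagonal_one using 2
    exact funext fun i => inv_mul_cancel₀ (ne_of_gt (hsq i))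
  have hDD : D * D = Λ := by
    have h : (fun i => Real.sqrt (μvec i) * Real.sqrt (μvec i)) = μvec :=
      funext fun i => Real.mul_self_sqrt (hμ i).le
    rw [hDdef, Matrix.diagonal_mul_diagonal, h, hΛdef]
  have hEE : E * E = Λ⁻¹ := by
    have h : (fun i => (Real.sqrt (μvec i))⁻¹ * (Real.sqrt (μvec i))⁻¹)
        = fun i => (μvec i)⁻¹ :=
      funext fun i => by rw [← mul_inv, Real.mul_self_sqrt (hμ i).le]
    rw [hEdef, Matrix.diagonal_mul_diagonal, h, hΛinv]
  set K : Matrix (Fin n) (Fin n) ℝ := D * N * E with hKdef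
  have hKT : E * M * D = Kᵀ := by
    rw [hKdef, hMN, Matrix.transpose_mul, Matrix.transpose_mul, hDdef, hEdef,
      Matrix.diagonal_transpose, Matrix.diagonal_transpose, ← Matrix.mul_assoc]
  have hED' : ∀ X : Matrix (Fin n) (Fin n) ℝ, E * (D * X) = X := fun X => by
    rw [← Matrix.mul_assoc, hED, Matrix.one_mul]
  have hDE' : ∀ X : Matrix (Fin n) (Fin n) ℝ, D * (E * X) = X := fun X => by
    rw [← Matrix.mul_assoc, hDE, Matrix.one_mul]
  have hconj : D * A * E = (lw * lQ) • (1 : Matrix (Fin n) (Fin n) ℝ) + K * Kᵀ := by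
    rw [hAdef, ← hKT, hKdef, ← hEE, ← hDD]
    simp only [Matrix.mul_add, Matrix.add_mul, Matrix.smul_mul, Matrix.mul_smul,
      Matrix.one_mul, Matrix.mul_one, Matrix.mul_assoc, hED', hDE']
    simp only [hDE, Matrix.mul_one]
  have hKKT : (K * Kᵀ).PosSemidef := by
    have h := Matrix.posSemidef_self_mul_conjTranspose K
    have hc : Kᴴ = Kᵀ := by
      ext i j
      simp [Matrix.conjTranspose_apply]
    rwa [hc] at h
  have hPd : (D * A * E).PosDef := by
    rw [hconj]
    refine Matrix.PosDef.add_posSemidef ?_ hKKT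
    rw [Matrix.smul_one_eq_diagonal]
    exact Matrix.PosDef.diagonal (fun i => mul_pos hlw hlQ)
  have hAdet : IsUnit A.det := by
    have hpos := hPd.det_pos
    rw [Matrix.det_mul, Matrix.det_mul] at hpos
    refine isUnit_iff_ne_zero.mpr fun h0 => ?_
    rw [h0] at hpos
    simp at hpos
  have hAunit : IsUnit A := (Matrix.isUnit_iff_isUnit_det A).mpr hAdet
  refine ⟨hAunit, ?_⟩
  -- key identity
  have hkey : A.mulVec w = (1 - γ) • (N * Λ⁻¹).mulVec ν₀ + (lw * lQ) • w := by
    have hmat : N * Λ⁻¹ * M * Λ * (Λ⁻¹ * M⁻¹) = N * Λ⁻¹ := by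
      have : N * Λ⁻¹ * M * Λ * (Λ⁻¹ * M⁻¹) = N * Λ⁻¹ * (M * ((Λ * Λ⁻¹) * M⁻¹)) := by
        noncomm_ring
      rw [this, Matrix.mul_nonsing_inv _ hΛdet, Matrix.one_mul,
        Matrix.mul_nonsing_inv _ hMdet, Matrix.mul_one]
    have hw : w = (1 - γ) • (Λ⁻¹ * M⁻¹).mulVec ν₀ := rfl
    calc A.mulVec w
        = (lw * lQ) • w + (N * Λ⁻¹ * M * Λ).mulVec w := by
          rw [Matrix.add_mulVec, Matrix.smul_mulVec, Matrix.one_mulVec]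
      _ = (lw * lQ) • w + (1 - γ) • ((N * Λ⁻¹ * M * Λ) * (Λ⁻¹ * M⁻¹)).mulVec ν₀ := by
          rw [hw, Matrix.mulVec_smul, Matrix.mulVec_mulVec]
      _ = (1 - γ) • (N * Λ⁻¹).mulVec ν₀ + (lw * lQ) • w := by
          rw [hmat]; abel
  have hw2 : w = A⁻¹.mulVec (A.mulVec w) := by
    rw [Matrix.mulVec_mulVec, Matrix.nonsing_inv_mul _ hAdet, Matrix.one_mulVec]
  have hrhs : w + A⁻¹.mulVec (lQ • R - (lQ * lw) • w)
      = A⁻¹.mulVec (A.mulVec w + (lQ • R - (lQ * lw) • w)) := by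
    rw [Matrix.mulVec_add, ← hw2]
  rw [hrhs, hkey, mul_comm lQ lw]
  congr 1
  abel
end
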